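/- arXiv:2005.00293 — 2 statements merged into one kernel-verified Lean document; each statement's English description precedes it below -/
import Mathlib

section
/- Energy decay of the observer error: Let w̃ : [0,L] × [0,∞) → ℝ be such that the partial derivatives w̃_t, w̃_z, w̃_tt, w̃_tz exist and are continuous on [0,L] × [0,∞), for every t ≥ 0 the map z ↦ w̃_z(z,t) is differentiable at every z ∈ (0,L) with z ∉ {L_{p1}, L_{p2}}, and suppose that ρ·w̃_tt(z,t) = T·∂_z w̃_z(z,t) − k·g(z)·∫_{L_{p1}}^{L_{p2}} w̃_t(y,t) dy holds for all such z and all t ≥ 0, together with the boundary conditions w̃(0,t) = 0 and w̃_z(L,t) = 0 for all t ≥ 0. Then the error energy H̃(t) = ∫₀^L ( (ρ/2)·w̃_t(z,t)² + (T/2)·w̃_z(z,t)² ) dz is differentiable in t and satisfies H̃'(t) = −k·( ∫_{L_{p1}}^{L_{p2}} w̃_t(y,t) dy )² ≤ 0 for all t ≥ 0. -/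
open Real MeasureTheory Set
open Function intervalIntegral
open scoped Topology

/-!
Write each energy density as its value at time `0` plus the time integral of its rate
`ρ w̃_t w̃_tt + T w̃_z w̃_tz` (using `∂_t w̃_z = w̃_tz`, equality of mixed partials) and swap the
two integrals: then `H̃' (t) = ∫₀^L (ρ w̃_t w̃_tt + T w̃_z w̃_tz) dz`. Off the two actuator edges the
wave equation makes this integrand the `z`-derivative of `T w̃_t w̃_z` minus
`k g w̃_t ∫_{Lp1}^{Lp2} w̃_t`, and the boundary term vanishes because `w̃_t (0, t) = 0` and
`w̃_z (L, t) = 0`, leaving `-k (∫_{Lp1}^{Lp2} w̃_t)²`.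
-/

section

variable {E : Type*} [NormedAddCommGroup E] [NormedSpace ℝ E]

theorem hasDerivWithinAt_Ici_of_eq_add_integral [CompleteSpace E] {f F : ℝ → E} {a t : ℝ}
    (hF : ContinuousOn F (Ici a)) (hf : ∀ s ∈ Ici a, f s = f a + ∫ u in a..s, F u)
    (ht : t ∈ Ici a) : HasDerivWithinAt f (F t) (Ici a) t := by
  set G : ℝ → E := fun u => F (max a u)
  have hG : Continuous G :=
    hF.comp_continuous (continuous_const.max continuous_id) fun u => le_max_left a u
  have hGF : ∀ s ∈ Ici a, f s = f a + ∫ u in a..s, G u := fun s hs => by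
    rw [hf s hs, integral_congr fun u hu => ?_]
    simp [G, max_eq_right (uIcc_of_le (mem_Ici.1 hs) ▸ hu).1]
  have hderiv := (hG.integral_hasStrictDerivAt a t).hasDerivAt.const_add (f a)
  simpa [G, max_eq_right (mem_Ici.1 ht)] using
    hderiv.hasDerivWithinAt.congr (fun s hs => hGF s hs) (hGF t ht)

theorem integral_eq_sub_of_hasDerivWithinAt_Ici [CompleteSpace E] {f f' : ℝ → E} {a b : ℝ}
    (hab : a ≤ b)
    (hf : ∀ t ∈ Ici a, HasDerivWithinAt f (f' t) (Ici a) t)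
    (hint : IntervalIntegrable f' volume a b) :
    ∫ t in a..b, f' t = f b - f a :=
  integral_eq_sub_of_hasDeriv_right_of_le hab
    (fun t ht => (hf t ht.1).continuousWithinAt.mono Icc_subset_Ici_self)
    (fun t ht => (hf t ht.1.le).mono fun _ hs => (ht.1.trans hs).le) hint

theorem ContinuousOn.continuousOn_intervalIntegral {X : Type*} [TopologicalSpace X]
    {d : ℝ → X → E} {a b : ℝ} {S : Set X} (hab : a ≤ b)
    (hd : ContinuousOn (uncurry d) (Icc a b ×ˢ S)) :
    ContinuousOn (fun x => ∫ z in a..b, d z x) S := by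
  rw [continuousOn_iff_continuous_domRestrict]
  have hclamp : Continuous (uncurry fun (x : S) (z : ℝ) => d (projIcc a b hab z) x) :=
    hd.comp_continuous (f := fun q : S × ℝ => ((projIcc a b hab q.2 : ℝ), (q.1 : X)))
      (by fun_prop) fun q => ⟨Subtype.prop _, q.1.2⟩
  refine (continuous_parametric_intervalIntegral_of_continuous' (μ := volume) hclamp a b).congr
    fun x => integral_congr fun z hz => ?_
  simp [projIcc_of_mem hab (uIcc_of_le hab ▸ hz)]

theorem hasDerivAt_intervalIntegral_of_continuousOn {F F' : ℝ → ℝ → E} {a b c d z : ℝ}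
    (hcd : c ≤ d) (hz : z ∈ Ioo a b)
    (hF : ContinuousOn (uncurry F) (Icc a b ×ˢ Icc c d))
    (hF' : ContinuousOn (uncurry F') (Icc a b ×ˢ Icc c d))
    (hderiv : ∀ y ∈ Ioo a b, ∀ u ∈ Icc c d, HasDerivAt (F · u) (F' y u) y) :
    HasDerivAt (fun y => ∫ u in c..d, F y u) (∫ u in c..d, F' z u) z := by
  obtain ⟨C, hC⟩ := (isCompact_Icc.prod isCompact_Icc).exists_bound_of_continuousOn hF'
  have hIoc : uIoc c d ⊆ Icc c d := uIoc_of_le hcd ▸ Ioc_subset_Icc_self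
  refine (hasDerivAt_integral_of_dominated_loc_of_deriv_le (bound := fun _ => C)
    (isOpen_Ioo.mem_nhds hz) ?_ ?_ ?_ ?_ intervalIntegrable_const ?_).2
  · filter_upwards [Icc_mem_nhds hz.1 hz.2] with y hy
    exact ((hF.uncurry_left y hy).mono hIoc).aestronglyMeasurable measurableSet_uIoc
  · exact (hF.uncurry_left z (Ioo_subset_Icc_self hz)).intervalIntegrable_of_Icc hcd
  · exact ((hF'.uncurry_left z (Ioo_subset_Icc_self hz)).mono hIoc).aestronglyMeasurable
      measurableSet_uIoc
  · exact Filter.Eventually.of_forall fun u hu y hy =>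
      hC (y, u) ⟨Ioo_subset_Icc_self hy, hIoc hu⟩
  · exact Filter.Eventually.of_forall fun u hu y hy => hderiv y hy u (hIoc hu)

theorem hasDerivWithinAt_Ici_mixed_partial [CompleteSpace E] {w wt wz wtz : ℝ → ℝ → E}
    {a b c z t : ℝ}
    (hwt : ∀ y ∈ Ioo a b, ∀ s ∈ Ici c, HasDerivWithinAt (w y ·) (wt y s) (Ici c) s)
    (hwz : ∀ s ∈ Ici c, HasDerivAt (w · s) (wz z s) z)
    (hwtz : ∀ y ∈ Ioo a b, ∀ s ∈ Ici c, HasDerivAt (wt · s) (wtz y s) y)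
    (hwt_cont : ContinuousOn (uncurry wt) (Icc a b ×ˢ Ici c))
    (hwtz_cont : ContinuousOn (uncurry wtz) (Icc a b ×ˢ Ici c))
    (hz : z ∈ Ioo a b) (ht : t ∈ Ici c) :
    HasDerivWithinAt (wz z ·) (wtz z t) (Ici c) t := by
  refine hasDerivWithinAt_Ici_of_eq_add_integral
    (hwtz_cont.uncurry_left z (Ioo_subset_Icc_self hz)) (fun s hs => ?_) ht
  have hrect : Icc a b ×ˢ Icc c s ⊆ Icc a b ×ˢ Ici c := prod_mono subset_rfl Icc_subset_Ici_self
  have hincr : ∀ᶠ y in 𝓝 z, w y s - w y c = ∫ u in c..s, wt y u := by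
    filter_upwards [isOpen_Ioo.mem_nhds hz] with y hy
    refine (integral_eq_sub_of_hasDerivWithinAt_Ici hs (hwt y hy) ?_).symm
    exact ((hwt_cont.uncurry_left y (Ioo_subset_Icc_self hy)).mono Icc_subset_Ici_self)
      |>.intervalIntegrable_of_Icc hs
  -- both sides are the `z`-derivative of `w (·, s) - w (·, c) = ∫_c^s wt (·, u) du`
  have hdiff := hasDerivAt_intervalIntegral_of_continuousOn hs hz (hwt_cont.mono hrect)
    (hwtz_cont.mono hrect) fun y hy u hu => hwtz y hy u hu.1
  rw [← ((hwz s hs).sub (hwz c self_mem_Ici)).unique (hdiff.congr_of_eventuallyEq hincr)]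
  abel

theorem hasDerivWithinAt_intervalIntegral_Ici [CompleteSpace E] {e d : ℝ → ℝ → E}
    {a b c t : ℝ} (hab : a ≤ b)
    (he : ∀ s ∈ Ici c, IntervalIntegrable (e · s) volume a b)
    (hde : ∀ z ∈ Ioo a b, ∀ s ∈ Ici c, HasDerivWithinAt (e z ·) (d z s) (Ici c) s)
    (hd : ContinuousOn (uncurry d) (Icc a b ×ˢ Ici c)) (ht : t ∈ Ici c) :
    HasDerivWithinAt (fun s => ∫ z in a..b, e z s) (∫ z in a..b, d z t) (Ici c) t := by
  refine hasDerivWithinAt_Ici_of_eq_add_integral (hd.continuousOn_intervalIntegral hab)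
    (fun s hs => ?_) ht
  have hrect : Icc a b ×ˢ Icc c s ⊆ Icc a b ×ˢ Ici c := prod_mono subset_rfl Icc_subset_Ici_self
  have hincr : ∀ z ∈ Ioo a b, e z s - e z c = ∫ u in c..s, d z u := fun z hz => by
    refine (integral_eq_sub_of_hasDerivWithinAt_Ici hs (hde z hz) ?_).symm
    exact ((hd.uncurry_left z (Ioo_subset_Icc_self hz)).mono Icc_subset_Ici_self)
      |>.intervalIntegrable_of_Icc hs
  have hfubini : ∫ z in a..b, ∫ u in c..s, d z u = ∫ u in c..s, ∫ z in a..b, d z u := by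
    refine intervalIntegral_intervalIntegral_swap ?_
    refine ((hd.mono hrect).integrableOn_compact (isCompact_Icc.prod isCompact_Icc)).mono_set ?_
    rw [uIoc_of_le hab, uIoc_of_le hs]
    exact prod_mono Ioc_subset_Icc_self Ioc_subset_Icc_self
  rw [← hfubini, ← integral_congr_Ioo_of_le hab hincr, integral_sub (he s hs) (he c self_mem_Ici)]
  abel

theorem intervalIntegral_indicator_Icc {f : ℝ → E} {a b p q : ℝ} (hap : a ≤ p) (hpq : p ≤ q)
    (hqb : q ≤ b) : ∫ z in a..b, (Icc p q).indicator f z = ∫ z in p..q, f z := by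
  rw [integral_of_le (hap.trans (hpq.trans hqb)), integral_of_le hpq,
    setIntegral_indicator measurableSet_Icc]
  refine setIntegral_congr_set ?_
  have hsub : Ioc a b ∩ Ioc p q = Ioc p q := inter_eq_right.2 (Ioc_subset_Ioc hap hqb)
  exact hsub ▸ (ae_eq_refl _).inter Ioc_ae_eq_Icc.symm

end

theorem integral_energy_rate_eq_of_wave_eq {f f' v v' p q : ℝ → ℝ} {a b ρ T : ℝ} {S : Set ℝ}
    (hab : a ≤ b) (hS : S.Countable)
    (hf : ContinuousOn f (Icc a b)) (hv : ContinuousOn v (Icc a b))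
    (hf' : ∀ z ∈ Ioo a b \ S, HasDerivAt f (f' z) z)
    (hv' : ∀ z ∈ Ioo a b \ S, HasDerivAt v (v' z) z)
    (hwave : ∀ z ∈ Ioo a b \ S, ρ * p z = T * v' z - q z)
    (hint : IntervalIntegrable (fun z => ρ * f z * p z + T * v z * f' z) volume a b)
    (hq : IntervalIntegrable (fun z => q z * f z) volume a b) :
    ∫ z in a..b, (ρ * f z * p z + T * v z * f' z) =
      T * (f b * v b - f a * v a) - ∫ z in a..b, q z * f z := by
  have hderiv : ∀ z ∈ Ioo a b \ S, HasDerivAt (fun z => T * (f z * v z))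
      ((ρ * f z * p z + T * v z * f' z) + q z * f z) z := fun z hz =>
    (((hf' z hz).mul (hv' z hz)).const_mul T).congr_deriv
      (by linear_combination -(f z) * hwave z hz)
  have hflux := integral_eq_of_hasDerivAt_off_countable_of_le (fun z => T * (f z * v z)) _ hab hS
    (continuousOn_const.mul (hf.mul hv)) hderiv (hint.add hq)
  rw [integral_add hint hq] at hflux
  linarith

theorem hasDerivWithinAt_wave_energy {w wt wz wtt wtz : ℝ → ℝ → ℝ} {a b c ρ T t : ℝ}
    (hab : a ≤ b)
    (hwt : ∀ z ∈ Ioo a b, ∀ s ∈ Ici c, HasDerivWithinAt (w z ·) (wt z s) (Ici c) s)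
    (hwz : ∀ z ∈ Ioo a b, ∀ s ∈ Ici c, HasDerivAt (w · s) (wz z s) z)
    (hwtt : ∀ z ∈ Ioo a b, ∀ s ∈ Ici c, HasDerivWithinAt (wt z ·) (wtt z s) (Ici c) s)
    (hwtz : ∀ z ∈ Ioo a b, ∀ s ∈ Ici c, HasDerivAt (wt · s) (wtz z s) z)
    (hwt_cont : ContinuousOn (uncurry wt) (Icc a b ×ˢ Ici c))
    (hwz_cont : ContinuousOn (uncurry wz) (Icc a b ×ˢ Ici c))
    (hwtt_cont : ContinuousOn (uncurry wtt) (Icc a b ×ˢ Ici c))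
    (hwtz_cont : ContinuousOn (uncurry wtz) (Icc a b ×ˢ Ici c)) (ht : t ∈ Ici c) :
    HasDerivWithinAt (fun s => ∫ z in a..b, ((ρ / 2) * (wt z s) ^ 2 + (T / 2) * (wz z s) ^ 2))
      (∫ z in a..b, (ρ * wt z t * wtt z t + T * wz z t * wtz z t)) (Ici c) t := by
  refine hasDerivWithinAt_intervalIntegral_Ici
    (d := fun z s => ρ * wt z s * wtt z s + T * wz z s * wtz z s) hab (fun s hs => ?_)
    (fun z hz s hs => ?_) ?_ ht
  · exact ((continuousOn_const.mul ((hwt_cont.uncurry_right s hs).pow 2)).add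
      (continuousOn_const.mul ((hwz_cont.uncurry_right s hs).pow 2))).intervalIntegrable_of_Icc hab
  · have hwzt := hasDerivWithinAt_Ici_mixed_partial hwt (hwz z hz) hwtz hwt_cont hwtz_cont hz hs
    refine ((((hwtt z hz s hs).fun_pow 2).const_mul (ρ / 2)).add
      ((hwzt.fun_pow 2).const_mul (T / 2))).congr_deriv ?_
    push_cast
    ring
  · exact ((continuousOn_const.mul hwt_cont).mul hwtt_cont).add
      ((continuousOn_const.mul hwz_cont).mul hwtz_cont)

theorem observer_error_energy_decay_general
    (L T ρ k Lp1 Lp2 : ℝ)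
    (hk : 0 < k)
    (hp1 : 0 ≤ Lp1) (hp12 : Lp1 < Lp2) (hp2 : Lp2 ≤ L)
    (g : ℝ → ℝ) (hg : ∀ z, g z = if Lp1 ≤ z ∧ z ≤ Lp2 then 1 else 0)
    (w wt wz wtt wtz wzz : ℝ → ℝ → ℝ)
    -- existence of the partial derivatives w̃_t, w̃_z, w̃_tt, w̃_tz on [0,L] × [0,∞)
    (hwt : ∀ z ∈ Icc (0:ℝ) L, ∀ t ∈ Ici (0:ℝ),
      HasDerivWithinAt (fun s => w z s) (wt z t) (Ici 0) t)
    (hwz : ∀ z ∈ Icc (0:ℝ) L, ∀ t ∈ Ici (0:ℝ),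
      HasDerivWithinAt (fun y => w y t) (wz z t) (Icc 0 L) z)
    (hwtt : ∀ z ∈ Icc (0:ℝ) L, ∀ t ∈ Ici (0:ℝ),
      HasDerivWithinAt (fun s => wt z s) (wtt z t) (Ici 0) t)
    (hwtz : ∀ z ∈ Icc (0:ℝ) L, ∀ t ∈ Ici (0:ℝ),
      HasDerivWithinAt (fun y => wt y t) (wtz z t) (Icc 0 L) z)
    -- continuity of the partial derivatives on [0,L] × [0,∞)
    (hwt_cont : ContinuousOn (fun q : ℝ × ℝ => wt q.1 q.2) (Icc 0 L ×ˢ Ici 0))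
    (hwz_cont : ContinuousOn (fun q : ℝ × ℝ => wz q.1 q.2) (Icc 0 L ×ˢ Ici 0))
    (hwtt_cont : ContinuousOn (fun q : ℝ × ℝ => wtt q.1 q.2) (Icc 0 L ×ˢ Ici 0))
    (hwtz_cont : ContinuousOn (fun q : ℝ × ℝ => wtz q.1 q.2) (Icc 0 L ×ˢ Ici 0))
    -- differentiability of z ↦ w̃_z(z,t) away from the actuator edges
    (hwzz : ∀ t ∈ Ici (0:ℝ), ∀ z ∈ Ioo (0:ℝ) L, z ≠ Lp1 → z ≠ Lp2 →
      HasDerivAt (fun y => wz y t) (wzz z t) z)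
    -- observer-error dynamics ρ w̃_tt = T ∂_z w̃_z − k g(z) ∫_{Lp1}^{Lp2} w̃_t dy
    (hpde : ∀ t ∈ Ici (0:ℝ), ∀ z ∈ Ioo (0:ℝ) L, z ≠ Lp1 → z ≠ Lp2 →
      ρ * wtt z t = T * wzz z t - k * g z * ∫ y in Lp1..Lp2, wt y t)
    -- boundary conditions
    (hbc0 : ∀ t ∈ Ici (0:ℝ), w 0 t = 0)
    (hbcL : ∀ t ∈ Ici (0:ℝ), wz L t = 0) :
    ∀ t ∈ Ici (0:ℝ),
      HasDerivWithinAt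
        (fun s => ∫ z in (0:ℝ)..L, ((ρ/2) * (wt z s)^2 + (T/2) * (wz z s)^2))
        (-k * (∫ y in Lp1..Lp2, wt y t)^2) (Ici 0) t
      ∧ -k * (∫ y in Lp1..Lp2, wt y t)^2 ≤ 0 := by
  have hL : 0 ≤ L := hp1.trans (hp12.le.trans hp2)
  have hnhds : ∀ z ∈ Ioo (0:ℝ) L, Icc 0 L ∈ 𝓝 z := fun z hz => Icc_mem_nhds hz.1 hz.2
  intro t ht
  set I := ∫ y in Lp1..Lp2, wt y t
  refine ⟨?_, mul_nonpos_of_nonpos_of_nonneg (neg_nonpos.2 hk.le) (sq_nonneg I)⟩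
  have hwt0 : wt 0 t = 0 := (uniqueDiffOn_Ici 0 t ht).eq_deriv _ (hwt 0 (left_mem_Icc.2 hL) t ht)
    ((hasDerivWithinAt_const t _ 0).congr (fun s hs => hbc0 s hs) (hbc0 t ht))
  have hforce : (fun z => k * g z * I * wt z t) =
      fun z => k * I * (Icc Lp1 Lp2).indicator (wt · t) z := by
    ext z
    by_cases hz : Lp1 ≤ z ∧ z ≤ Lp2 <;> simp [hg, hz, indicator]
  have hwt_slice : ContinuousOn (wt · t) (Icc 0 L) := hwt_cont.uncurry_right t ht
  have hforce_int : IntervalIntegrable (fun z => k * g z * I * wt z t) volume 0 L := by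
    rw [hforce, intervalIntegrable_iff_integrableOn_Ioc_of_le hL]
    exact ((hwt_slice.integrableOn_Icc.mono_set Ioc_subset_Icc_self).indicator
      measurableSet_Icc).const_mul _
  have hrate_int : IntervalIntegrable
      (fun z => ρ * wt z t * wtt z t + T * wz z t * wtz z t) volume 0 L :=
    (((continuousOn_const.mul hwt_slice).mul (hwtt_cont.uncurry_right t ht)).add
      ((continuousOn_const.mul (hwz_cont.uncurry_right t ht)).mul
        (hwtz_cont.uncurry_right t ht))).intervalIntegrable_of_Icc hL
  have hflux : ∫ z in (0:ℝ)..L, (ρ * wt z t * wtt z t + T * wz z t * wtz z t) = -k * I ^ 2 := by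
    rw [integral_energy_rate_eq_of_wave_eq hL ((countable_singleton Lp2).insert Lp1) hwt_slice
      (hwz_cont.uncurry_right t ht)
      (fun z hz => (hwtz z (Ioo_subset_Icc_self hz.1) t ht).hasDerivAt (hnhds z hz.1))
      (fun z hz => hwzz t ht z hz.1 (fun h => hz.2 (.inl h)) (fun h => hz.2 (.inr h)))
      (fun z hz => hpde t ht z hz.1 (fun h => hz.2 (.inl h)) (fun h => hz.2 (.inr h)))
      hrate_int hforce_int, hforce, intervalIntegral.integral_const_mul,
      intervalIntegral_indicator_Icc hp1 hp12.le hp2, hbcL t ht, hwt0]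
    ring
  rw [← hflux]
  exact hasDerivWithinAt_wave_energy hL (fun z hz => hwt z (Ioo_subset_Icc_self hz))
    (fun z hz s hs => (hwz z (Ioo_subset_Icc_self hz) s hs).hasDerivAt (hnhds z hz))
    (fun z hz => hwtt z (Ioo_subset_Icc_self hz))
    (fun z hz s hs => (hwtz z (Ioo_subset_Icc_self hz) s hs).hasDerivAt (hnhds z hz))
    hwt_cont hwz_cont hwtt_cont hwtz_cont ht

/-- Energy decay of the observer error:
`H̃(t) = ∫₀^L ((ρ/2) w̃_t² + (T/2) w̃_z²) dz` satisfies
`H̃'(t) = −k (∫_{Lp1}^{Lp2} w̃_t dy)² ≤ 0`. -/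
theorem observer_error_energy_decay
    (L T ρ k Lp1 Lp2 : ℝ)
    (hL : 0 < L) (hT : 0 < T) (hρ : 0 < ρ) (hk : 0 < k)
    (hp1 : 0 ≤ Lp1) (hp12 : Lp1 < Lp2) (hp2 : Lp2 ≤ L)
    (g : ℝ → ℝ) (hg : ∀ z, g z = if Lp1 ≤ z ∧ z ≤ Lp2 then 1 else 0)
    (w wt wz wtt wtz wzz : ℝ → ℝ → ℝ)
    -- existence of the partial derivatives w̃_t, w̃_z, w̃_tt, w̃_tz on [0,L] × [0,∞)
    (hwt : ∀ z ∈ Icc (0:ℝ) L, ∀ t ∈ Ici (0:ℝ),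
      HasDerivWithinAt (fun s => w z s) (wt z t) (Ici 0) t)
    (hwz : ∀ z ∈ Icc (0:ℝ) L, ∀ t ∈ Ici (0:ℝ),
      HasDerivWithinAt (fun y => w y t) (wz z t) (Icc 0 L) z)
    (hwtt : ∀ z ∈ Icc (0:ℝ) L, ∀ t ∈ Ici (0:ℝ),
      HasDerivWithinAt (fun s => wt z s) (wtt z t) (Ici 0) t)
    (hwtz : ∀ z ∈ Icc (0:ℝ) L, ∀ t ∈ Ici (0:ℝ),
      HasDerivWithinAt (fun y => wt y t) (wtz z t) (Icc 0 L) z)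
    -- continuity of the partial derivatives on [0,L] × [0,∞)
    (hwt_cont : ContinuousOn (fun q : ℝ × ℝ => wt q.1 q.2) (Icc 0 L ×ˢ Ici 0))
    (hwz_cont : ContinuousOn (fun q : ℝ × ℝ => wz q.1 q.2) (Icc 0 L ×ˢ Ici 0))
    (hwtt_cont : ContinuousOn (fun q : ℝ × ℝ => wtt q.1 q.2) (Icc 0 L ×ˢ Ici 0))
    (hwtz_cont : ContinuousOn (fun q : ℝ × ℝ => wtz q.1 q.2) (Icc 0 L ×ˢ Ici 0))
    -- differentiability of z ↦ w̃_z(z,t) away from the actuator edges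
    (hwzz : ∀ t ∈ Ici (0:ℝ), ∀ z ∈ Ioo (0:ℝ) L, z ≠ Lp1 → z ≠ Lp2 →
      HasDerivAt (fun y => wz y t) (wzz z t) z)
    -- observer-error dynamics ρ w̃_tt = T ∂_z w̃_z − k g(z) ∫_{Lp1}^{Lp2} w̃_t dy
    (hpde : ∀ t ∈ Ici (0:ℝ), ∀ z ∈ Ioo (0:ℝ) L, z ≠ Lp1 → z ≠ Lp2 →
      ρ * wtt z t = T * wzz z t - k * g z * ∫ y in Lp1..Lp2, wt y t)
    -- boundary conditions
    (hbc0 : ∀ t ∈ Ici (0:ℝ), w 0 t = 0)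
    (hbcL : ∀ t ∈ Ici (0:ℝ), wz L t = 0) :
    ∀ t ∈ Ici (0:ℝ),
      HasDerivWithinAt
        (fun s => ∫ z in (0:ℝ)..L, ((ρ/2) * (wt z s)^2 + (T/2) * (wz z s)^2))
        (-k * (∫ y in Lp1..Lp2, wt y t)^2) (Ici 0) t
      ∧ -k * (∫ y in Lp1..Lp2, wt y t)^2 ≤ 0 :=
  observer_error_energy_decay_general L T ρ k Lp1 Lp2 hk hp1 hp12 hp2 g hg w wt wz wtt wtz wzz hwt
    hwz hwtt hwtz hwt_cont hwz_cont hwtt_cont hwtz_cont hwzz hpde hbc0 hbcL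
end

section
/- Only the trivial solution lies in the invariant set S under the actuator-length condition: Let L > 0, ϑ > 0 and 0 ≤ L_{p1} < L_{p2} ≤ L, and assume that for all positive integers k and j one has L_{p2} − L_{p1} ≠ 4·L·j/(2k − 1) and L_{p2} + L_{p1} ≠ 4·L·j/(2k − 1). For positive integers k set ω_k = (k − 1/2)·π/L and γ_k = ∫_{L_{p1}}^{L_{p2}} sin(ω_k·z) dz. Let (a_k)_{k≥1} and (b_k)_{k≥1} be real sequences with Σ_{k=1}^∞ (a_k² + b_k²) < ∞. If for every t ≥ 0 the family ( (a_k·cos(ω_k·ϑ·t) + b_k·sin(ω_k·ϑ·t))·γ_k )_{k≥1} is summable with sum equal to 0, then a_k = 0 and b_k = 0 for every k ≥ 1; that is, the only solution of the free wave equation in the set S = {χ : dH̃/dt = 0} is the trivial one. -/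
open Real Set intervalIntegral

open MeasureTheory Filter Topology Finset

/-!
Rescale time so that `ω (k + 1) * ϑ * t = (2 k + 1) s`. The terms
`u k s = c k cos ((2 k + 1) s) + d k sin ((2 k + 1) s)`, with `c k = a (k + 1) γ (k + 1)` and
`d k = b (k + 1) γ (k + 1)`, are orthogonal on `[0, 2π]`, and `c, d` are square-summable since
`|γ k| ≤ Lp2 - Lp1`. So the partial sums of `∑ u k` are bounded in `L²` and tend to `0` pointwise;
by Egorov's theorem they then tend to `0` in `L¹`, and testing them against `u m` gives
`π (c m ^ 2 + d m ^ 2) = 0`. Finally `γ k = (cos (ω k Lp1) - cos (ω k Lp2)) / ω k`, and the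
actuator-length condition says exactly that these two cosines differ, so `γ k ≠ 0`.
-/

section L1Convergence

variable {α : Type*} [MeasurableSpace α] {μ : Measure α} [IsFiniteMeasure μ]

lemma abs_le_mul_sq_add_inv {η : ℝ} (hη : 0 < η) (y : ℝ) :
    |y| ≤ η / 2 * y ^ 2 + 1 / (2 * η) := by
  have h : η / 2 * y ^ 2 + 1 / (2 * η) - |y| = (η * |y| - 1) ^ 2 / (2 * η) := by
    field_simp
    ring_nf
    rw [sq_abs]
  linarith [h ▸ (by positivity : (0 : ℝ) ≤ (η * |y| - 1) ^ 2 / (2 * η))]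

lemma setIntegral_abs_le_of_integrable_sq {f : α → ℝ} (hf : Integrable f μ)
    (hf2 : Integrable (fun x => f x ^ 2) μ) (s : Set α) {η : ℝ} (hη : 0 < η) :
    ∫ x in s, |f x| ∂μ ≤ η / 2 * ∫ x, f x ^ 2 ∂μ + μ.real s / (2 * η) := by
  calc ∫ x in s, |f x| ∂μ ≤ ∫ x in s, (η / 2 * f x ^ 2 + 1 / (2 * η)) ∂μ :=
        setIntegral_mono hf.abs.integrableOn
          ((hf2.const_mul _).add (integrable_const _)).integrableOn
          fun x => abs_le_mul_sq_add_inv hη (f x)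
    _ = η / 2 * ∫ x in s, f x ^ 2 ∂μ + μ.real s / (2 * η) := by
        rw [integral_add (hf2.const_mul _).integrableOn (integrable_const _),
          MeasureTheory.integral_const_mul, setIntegral_const, smul_eq_mul]
        ring
    _ ≤ η / 2 * ∫ x, f x ^ 2 ∂μ + μ.real s / (2 * η) := by
        have := setIntegral_le_integral (s := s) hf2 (ae_of_all _ fun x => sq_nonneg (f x))
        gcongr

theorem tendsto_integral_abs_of_ae_tendsto_zero {F : ℕ → α → ℝ}
    (hF : ∀ N, StronglyMeasurable (F N)) (hF1 : ∀ N, Integrable (F N) μ)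
    (hF2 : ∀ N, Integrable (fun x => F N x ^ 2) μ) {C : ℝ} (hC : ∀ N, ∫ x, F N x ^ 2 ∂μ ≤ C)
    (hlim : ∀ᵐ x ∂μ, Tendsto (fun N => F N x) atTop (𝓝 0)) :
    Tendsto (fun N => ∫ x, |F N x| ∂μ) atTop (𝓝 0) := by
  have hC0 : 0 ≤ C := (integral_nonneg fun x => sq_nonneg (F 0 x)).trans (hC 0)
  set M := μ.real univ
  rw [Metric.tendsto_atTop]
  intro ε hε
  set η := ε / (C + 1) with hη_def
  set ε₁ := ε / (2 * (M + 1)) with hε₁_def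
  have hη : 0 < η := by positivity
  obtain ⟨E, hE, hEμ, hunif⟩ :=
    tendstoUniformlyOn_of_ae_tendsto' hF stronglyMeasurable_const hlim (by positivity : 0 < η ^ 2)
  obtain ⟨N₀, hN₀⟩ := eventually_atTop.1 (Metric.tendstoUniformlyOn_iff.1 hunif ε₁ (by positivity))
  refine ⟨N₀, fun N hN => ?_⟩
  have hsmall : ∫ x in E, |F N x| ∂μ ≤ η / 2 * (C + 1) := by
    have hEη : μ.real E ≤ η ^ 2 := ENNReal.toReal_le_of_le_ofReal (by positivity) hEμ
    calc ∫ x in E, |F N x| ∂μ ≤ η / 2 * ∫ x, F N x ^ 2 ∂μ + μ.real E / (2 * η) :=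
          setIntegral_abs_le_of_integrable_sq (hF1 N) (hF2 N) E hη
      _ ≤ η / 2 * C + η ^ 2 / (2 * η) := by gcongr; exact hC N
      _ = η / 2 * (C + 1) := by field_simp
  have huniform : ∫ x in Eᶜ, |F N x| ∂μ ≤ ε₁ * M := by
    calc ∫ x in Eᶜ, |F N x| ∂μ ≤ ∫ x in Eᶜ, ε₁ ∂μ :=
          setIntegral_mono_on (hF1 N).abs.integrableOn (integrable_const _).integrableOn
            hE.compl fun x hx => by simpa [dist_comm] using (hN₀ N hN x hx).le
      _ ≤ ε₁ * M := by
          rw [setIntegral_const, smul_eq_mul, mul_comm]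
          gcongr
          exact measureReal_mono (subset_univ _)
  have h1 : η / 2 * (C + 1) = ε / 2 := by rw [hη_def]; field_simp
  have h2 : ε₁ * M < ε / 2 := by
    rw [hε₁_def, div_mul_eq_mul_div, div_lt_div_iff₀ (by positivity) two_pos]
    nlinarith
  rw [Real.dist_eq, sub_zero, abs_of_nonneg (integral_nonneg fun x => abs_nonneg _),
    ← integral_add_compl hE (hF1 N).abs]
  linarith

end L1Convergence

section OrthogonalFamily

variable {α : Type*} [MeasurableSpace α] {μ : Measure α} {u : ℕ → α → ℝ} {w : ℕ → ℝ}

lemma integral_sum_mul_of_orthogonal (hint : ∀ k j, Integrable (fun x => u k x * u j x) μ)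
    (horth : ∀ k j, ∫ x, u k x * u j x ∂μ = if k = j then w k else 0) (N j : ℕ) :
    ∫ x, (∑ k ∈ range N, u k x) * u j x ∂μ = if j < N then w j else 0 := by
  simp_rw [Finset.sum_mul]
  rw [integral_finsetSum _ fun k _ => hint k j]
  simp [horth]

lemma integral_sum_sq_of_orthogonal (hint : ∀ k j, Integrable (fun x => u k x * u j x) μ)
    (horth : ∀ k j, ∫ x, u k x * u j x ∂μ = if k = j then w k else 0) (N : ℕ) :
    ∫ x, (∑ k ∈ range N, u k x) ^ 2 ∂μ = ∑ k ∈ range N, w k := by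
  have hint' : ∀ j, Integrable (fun x => (∑ k ∈ range N, u k x) * u j x) μ := fun j => by
    simp_rw [Finset.sum_mul]
    exact integrable_finsetSum _ fun k _ => hint k j
  simp_rw [sq, Finset.mul_sum]
  rw [integral_finsetSum _ fun j _ => hint' j]
  exact Finset.sum_congr rfl fun j hj => by
    rw [integral_sum_mul_of_orthogonal hint horth, if_pos (mem_range.1 hj)]

theorem orthogonal_weight_eq_zero_of_ae_hasSum_zero [IsFiniteMeasure μ]
    (hu : ∀ k, StronglyMeasurable (u k)) (hbdd : ∀ k, ∃ B, ∀ x, |u k x| ≤ B)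
    (horth : ∀ k j, ∫ x, u k x * u j x ∂μ = if k = j then w k else 0) (hw : Summable w)
    (hsum : ∀ᵐ x ∂μ, HasSum (fun k => u k x) 0) (m : ℕ) : w m = 0 := by
  choose B hB using hbdd
  set S : ℕ → α → ℝ := fun N x => ∑ k ∈ range N, u k x
  have hS : ∀ N, StronglyMeasurable (S N) := fun N =>
    Finset.stronglyMeasurable_fun_sum _ fun k _ => hu k
  have hSB : ∀ N x, |S N x| ≤ ∑ k ∈ range N, B k := fun N x =>
    (Finset.abs_sum_le_sum_abs _ _).trans (Finset.sum_le_sum fun k _ => hB k x)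
  have hbound : ∀ {f : α → ℝ} {c : ℝ}, StronglyMeasurable f → (∀ x, |f x| ≤ c) → Integrable f μ :=
    fun hf hc => Integrable.of_bound hf.aestronglyMeasurable _ (ae_of_all _ hc)
  have hint : ∀ k j, Integrable (fun x => u k x * u j x) μ := fun k j =>
    (hbound (hu j) (hB j)).bdd_mul (hu k).aestronglyMeasurable (ae_of_all _ (hB k))
  have hS1 : ∀ N, Integrable (S N) μ := fun N => hbound (hS N) (hSB N)
  have hS2 : ∀ N, Integrable (fun x => S N x ^ 2) μ := fun N => by
    simp_rw [sq]
    exact (hS1 N).bdd_mul (hS N).aestronglyMeasurable (ae_of_all _ (hSB N))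
  have hw0 : ∀ k, 0 ≤ w k := fun k => by
    have : 0 ≤ ∫ x, u k x * u k x ∂μ := integral_nonneg fun x => mul_self_nonneg (u k x)
    rwa [horth, if_pos rfl] at this
  have hL1 : Tendsto (fun N => ∫ x, |S N x| ∂μ) atTop (𝓝 0) :=
    tendsto_integral_abs_of_ae_tendsto_zero hS hS1 hS2
      (fun N => (integral_sum_sq_of_orthogonal hint horth N).trans_le
        (hw.sum_le_tsum _ fun k _ => hw0 k))
      (hsum.mono fun x hx => hx.tendsto_sum_nat)
  have htest : Tendsto (fun N => ∫ x, S N x * u m x ∂μ) atTop (𝓝 0) := by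
    refine squeeze_zero_norm (fun N => ?_) (by simpa using hL1.const_mul (B m))
    calc ‖∫ x, S N x * u m x ∂μ‖ ≤ ∫ x, |S N x * u m x| ∂μ := norm_integral_le_integral_norm _
      _ ≤ ∫ x, B m * |S N x| ∂μ :=
          integral_mono ((hS1 N).mul_bdd (hu m).aestronglyMeasurable (ae_of_all _ (hB m))).abs
            ((hS1 N).abs.const_mul _) fun x => by
              rw [abs_mul, mul_comm]
              exact mul_le_mul_of_nonneg_right (hB m x) (abs_nonneg _)
      _ = B m * ∫ x, |S N x| ∂μ := MeasureTheory.integral_const_mul _ _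
  refine tendsto_nhds_unique (tendsto_atTop_of_eventually_const fun N (hN : m + 1 ≤ N) => ?_) htest
  rw [integral_sum_mul_of_orthogonal hint horth, if_pos (by omega)]

end OrthogonalFamily

lemma integral_cos_int_mul_two_pi (n : ℤ) :
    ∫ s in (0 : ℝ)..2 * π, cos (n * s) = if n = 0 then 2 * π else 0 := by
  split_ifs with hn
  · simp [hn]
  · rw [integral_comp_mul_left (fun x => cos x) (Int.cast_ne_zero.2 hn), integral_cos,
      show (n : ℝ) * (2 * π) = (2 * n : ℤ) * π by push_cast; ring, sin_int_mul_pi]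
    simp

lemma integral_sin_int_mul_two_pi (n : ℤ) : ∫ s in (0 : ℝ)..2 * π, sin (n * s) = 0 := by
  rcases eq_or_ne n 0 with rfl | hn
  · simp
  · rw [integral_comp_mul_left (fun x => sin x) (Int.cast_ne_zero.2 hn), integral_sin,
      cos_int_mul_two_pi]
    simp

lemma integral_harmonic_mul_harmonic {p q : ℕ} (hpq : p + q ≠ 0) (A B C D : ℝ) :
    ∫ s in (0 : ℝ)..2 * π,
        (A * cos (p * s) + B * sin (p * s)) * (C * cos (q * s) + D * sin (q * s)) =
      if p = q then π * (A * C + B * D) else 0 := by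
  have hprod : ∀ s : ℝ,
      (A * cos (p * s) + B * sin (p * s)) * (C * cos (q * s) + D * sin (q * s)) =
        ((A * C + B * D) * cos (((p - q : ℤ) : ℝ) * s)
          + (A * C - B * D) * cos (((p + q : ℤ) : ℝ) * s)
          + (B * C - A * D) * sin (((p - q : ℤ) : ℝ) * s)
          + (A * D + B * C) * sin (((p + q : ℤ) : ℝ) * s)) / 2 := fun s => by
    push_cast
    simp only [sub_mul, add_mul, cos_sub, cos_add, sin_sub, sin_add]
    ring
  have hcos : ∀ (n : ℤ) (c : ℝ), IntervalIntegrable (fun s => c * cos (n * s)) volume 0 (2 * π) :=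
    fun n c => (by fun_prop : Continuous _).intervalIntegrable _ _
  have hsin : ∀ (n : ℤ) (c : ℝ), IntervalIntegrable (fun s => c * sin (n * s)) volume 0 (2 * π) :=
    fun n c => (by fun_prop : Continuous _).intervalIntegrable _ _
  simp_rw [hprod]
  rw [intervalIntegral.integral_div,
    integral_add (((hcos _ _).add (hcos _ _)).add (hsin _ _)) (hsin _ _),
    integral_add ((hcos _ _).add (hcos _ _)) (hsin _ _), integral_add (hcos _ _) (hcos _ _)]
  simp only [intervalIntegral.integral_const_mul, integral_cos_int_mul_two_pi,
    integral_sin_int_mul_two_pi, sub_eq_zero, Int.natCast_inj, show (p + q : ℤ) ≠ 0 by omega,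
    if_false]
  split_ifs <;> ring

lemma integral_odd_harmonic_mul_odd_harmonic (c d : ℕ → ℝ) (k j : ℕ) :
    ∫ s in (0 : ℝ)..2 * π,
        (c k * cos ((2 * k + 1 : ℕ) * s) + d k * sin ((2 * k + 1 : ℕ) * s)) *
          (c j * cos ((2 * j + 1 : ℕ) * s) + d j * sin ((2 * j + 1 : ℕ) * s)) =
      if k = j then π * (c k ^ 2 + d k ^ 2) else 0 := by
  rw [integral_harmonic_mul_harmonic (by omega)]
  simp only [Nat.add_right_cancel_iff, mul_right_inj' two_ne_zero]
  split_ifs with h <;> simp [h, sq]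

lemma integral_sin_const_mul {ω : ℝ} (hω : ω ≠ 0) (a b : ℝ) :
    ∫ z in a..b, sin (ω * z) = (cos (ω * a) - cos (ω * b)) / ω := by
  rw [integral_comp_mul_left (fun x => sin x) hω, integral_sin, smul_eq_mul, inv_mul_eq_div]

lemma exists_eq_four_mul_div_of_mul_eq_two_pi_mul {L x : ℝ} (hL : 0 < L) (hx : 0 < x) {k : ℕ}
    (hk : 1 ≤ k) {n : ℤ} (h : ((k : ℝ) - 1 / 2) * π / L * x = 2 * n * π) :
    ∃ j : ℕ, 1 ≤ j ∧ x = 4 * L * j / (2 * k - 1) := by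
  have hk' : (1 : ℝ) ≤ k := by exact_mod_cast hk
  have hx' : x * (2 * k - 1) = 4 * L * n := by
    field_simp at h
    nlinarith [pi_pos]
  have hn : 0 < n := by
    have : (0 : ℝ) < n := by nlinarith
    exact_mod_cast this
  lift n to ℕ using hn.le
  exact ⟨n, by exact_mod_cast hn, by rw [eq_div_iff (by linarith)]; exact_mod_cast hx'⟩

lemma integral_sin_eigenmode_ne_zero {L Lp1 Lp2 : ℝ} (hL : 0 < L) (hp1 : 0 ≤ Lp1)
    (hp12 : Lp1 < Lp2) {k : ℕ} (hk : 1 ≤ k)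
    (hlen : ∀ j : ℕ, 1 ≤ j →
      Lp2 - Lp1 ≠ 4 * L * j / (2 * k - 1) ∧ Lp2 + Lp1 ≠ 4 * L * j / (2 * k - 1)) :
    ∫ z in Lp1..Lp2, sin (((k : ℝ) - 1 / 2) * π / L * z) ≠ 0 := by
  have hω : 0 < ((k : ℝ) - 1 / 2) * π / L := by
    have : (1 : ℝ) ≤ k := by exact_mod_cast hk
    have : (0 : ℝ) < k - 1 / 2 := by linarith
    positivity
  rw [integral_sin_const_mul hω.ne', div_ne_zero_iff, sub_ne_zero]
  refine ⟨fun hcos => ?_, hω.ne'⟩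
  obtain ⟨n, hn | hn⟩ := cos_eq_cos_iff.1 hcos
  · obtain ⟨j, hj, hx⟩ := exists_eq_four_mul_div_of_mul_eq_two_pi_mul hL (sub_pos.2 hp12) hk
      (n := n) (by linarith)
    exact (hlen j hj).1 hx
  · obtain ⟨j, hj, hx⟩ := exists_eq_four_mul_div_of_mul_eq_two_pi_mul hL
      (by linarith : 0 < Lp2 + Lp1) hk (n := n) (by linarith)
    exact (hlen j hj).2 hx

lemma eigenfrequency_mul_rescaled_time {L ϑ : ℝ} (hL : L ≠ 0) (hϑ : ϑ ≠ 0) (k : ℕ) (s : ℝ) :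
    (((k + 1 : ℕ) : ℝ) - 1 / 2) * π / L * ϑ * (2 * L * s / (π * ϑ)) =
      ((2 * k + 1 : ℕ) : ℝ) * s := by
  push_cast
  field_simp
  ring

lemma abs_mul_cos_add_mul_sin_le (c d x : ℝ) : |c * cos x + d * sin x| ≤ |c| + |d| := by
  calc |c * cos x + d * sin x| ≤ |c| * |cos x| + |d| * |sin x| := by
        simpa only [abs_mul] using abs_add_le (c * cos x) (d * sin x)
    _ ≤ |c| * 1 + |d| * 1 := by gcongr <;> simp [abs_cos_le_one, abs_sin_le_one]
    _ = |c| + |d| := by ring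

lemma Summable.sq_mul_add_sq_mul {a b g : ℕ → ℝ} {B : ℝ}
    (h : Summable fun k => a k ^ 2 + b k ^ 2) (hg : ∀ k, g k ^ 2 ≤ B) :
    Summable fun k => (a k * g k) ^ 2 + (b k * g k) ^ 2 := by
  refine .of_nonneg_of_le (fun k => by positivity) (fun k => ?_) (h.mul_left B)
  rw [mul_pow, mul_pow]
  nlinarith [sq_nonneg (a k), sq_nonneg (b k), hg k]

lemma sq_integral_sin_const_mul_le (ω a b : ℝ) : (∫ z in a..b, sin (ω * z)) ^ 2 ≤ (b - a) ^ 2 := by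
  refine sq_le_sq.2 ?_
  simpa [Real.norm_eq_abs] using
    norm_integral_le_of_norm_le_const (C := 1) (a := a) (b := b) (f := fun z => sin (ω * z))
      fun z _ => by simpa using abs_sin_le_one (ω * z)

theorem invariant_set_only_trivial_solution_general
    (L ϑ Lp1 Lp2 : ℝ)
    (hL : 0 < L) (hϑ : 0 < ϑ)
    (hp1 : 0 ≤ Lp1) (hp12 : Lp1 < Lp2)
    (hlen : ∀ k j : ℕ, 1 ≤ k → 1 ≤ j →
      Lp2 - Lp1 ≠ 4 * L * (j : ℝ) / (2 * (k : ℝ) - 1)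
      ∧ Lp2 + Lp1 ≠ 4 * L * (j : ℝ) / (2 * (k : ℝ) - 1))
    (ω γ : ℕ → ℝ)
    (hω : ∀ k : ℕ, ω k = ((k : ℝ) - 1/2) * π / L)
    (hγ : ∀ k : ℕ, γ k = ∫ z in Lp1..Lp2, Real.sin (ω k * z))
    (a b : ℕ → ℝ)
    (hl2 : Summable (fun k : ℕ => (a (k + 1))^2 + (b (k + 1))^2))
    (hsum : ∀ t : ℝ, 0 ≤ t →
      HasSum (fun k : ℕ =>
        (a (k + 1) * Real.cos (ω (k + 1) * ϑ * t)
          + b (k + 1) * Real.sin (ω (k + 1) * ϑ * t)) * γ (k + 1)) 0) :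
    ∀ k : ℕ, 1 ≤ k → a k = 0 ∧ b k = 0 := by
  set c : ℕ → ℝ := fun k => a (k + 1) * γ (k + 1)
  set d : ℕ → ℝ := fun k => b (k + 1) * γ (k + 1)
  set u : ℕ → ℝ → ℝ := fun k s =>
    c k * cos ((2 * k + 1 : ℕ) * s) + d k * sin ((2 * k + 1 : ℕ) * s)
  set μ : Measure ℝ := volume.restrict (Ioc 0 (2 * π))
  have horth : ∀ k j, ∫ s, u k s * u j s ∂μ = if k = j then π * (c k ^ 2 + d k ^ 2) else 0 :=
    fun k j => by rw [← integral_of_le two_pi_pos.le, integral_odd_harmonic_mul_odd_harmonic]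
  have hw : Summable fun k => π * (c k ^ 2 + d k ^ 2) :=
    (hl2.sq_mul_add_sq_mul fun k => hγ (k + 1) ▸
      sq_integral_sin_const_mul_le (ω (k + 1)) Lp1 Lp2).mul_left π
  have hzero : ∀ᵐ s ∂μ, HasSum (fun k => u k s) 0 := by
    refine (ae_restrict_mem measurableSet_Ioc).mono fun s hs => ?_
    convert hsum (2 * L * s / (π * ϑ)) (by have := hs.1.le; positivity) using 2 with k
    rw [hω, eigenfrequency_mul_rescaled_time hL.ne' hϑ.ne']
    ring
  intro k hk
  obtain ⟨m, rfl⟩ := Nat.exists_eq_add_of_le' hk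
  have hcd := orthogonal_weight_eq_zero_of_ae_hasSum_zero (μ := μ)
    (fun k => (by fun_prop : Continuous (u k)).stronglyMeasurable)
    (fun k => ⟨_, fun s => abs_mul_cos_add_mul_sin_le (c k) (d k) _⟩) horth hw hzero m
  have hγm : γ (m + 1) ≠ 0 := by
    rw [hγ, hω]
    exact integral_sin_eigenmode_ne_zero hL hp1 hp12 hk (hlen (m + 1) · hk)
  obtain ⟨hc, hd⟩ := (add_eq_zero_iff_of_nonneg (sq_nonneg _) (sq_nonneg _)).1
    ((mul_eq_zero.1 hcd).resolve_left pi_ne_zero)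
  exact ⟨(mul_eq_zero.1 (pow_eq_zero_iff two_ne_zero |>.1 hc)).resolve_right hγm,
    (mul_eq_zero.1 (pow_eq_zero_iff two_ne_zero |>.1 hd)).resolve_right hγm⟩

/-- Only the trivial solution lies in the invariant set `S` under the
actuator-length condition: if `Lp2 − Lp1 ≠ 4Lj/(2k−1)` and
`Lp2 + Lp1 ≠ 4Lj/(2k−1)` for all positive integers `k, j`, and the modal
superposition `Σ_{k≥1} (a_k cos(ω_k ϑ t) + b_k sin(ω_k ϑ t)) γ_k`, with
`γ_k = ∫_{Lp1}^{Lp2} sin(ω_k z) dz` and ℓ² coefficients, vanishes for all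
`t ≥ 0`, then all coefficients vanish. -/
theorem invariant_set_only_trivial_solution
    (L ϑ Lp1 Lp2 : ℝ)
    (hL : 0 < L) (hϑ : 0 < ϑ)
    (hp1 : 0 ≤ Lp1) (hp12 : Lp1 < Lp2) (hp2 : Lp2 ≤ L)
    (hlen : ∀ k j : ℕ, 1 ≤ k → 1 ≤ j →
      Lp2 - Lp1 ≠ 4 * L * (j : ℝ) / (2 * (k : ℝ) - 1)
      ∧ Lp2 + Lp1 ≠ 4 * L * (j : ℝ) / (2 * (k : ℝ) - 1))
    (ω γ : ℕ → ℝ)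
    (hω : ∀ k : ℕ, ω k = ((k : ℝ) - 1/2) * π / L)
    (hγ : ∀ k : ℕ, γ k = ∫ z in Lp1..Lp2, Real.sin (ω k * z))
    (a b : ℕ → ℝ)
    (hl2 : Summable (fun k : ℕ => (a (k + 1))^2 + (b (k + 1))^2))
    (hsum : ∀ t : ℝ, 0 ≤ t →
      HasSum (fun k : ℕ =>
        (a (k + 1) * Real.cos (ω (k + 1) * ϑ * t)
          + b (k + 1) * Real.sin (ω (k + 1) * ϑ * t)) * γ (k + 1)) 0) :
    ∀ k : ℕ, 1 ≤ k → a k = 0 ∧ b k = 0 :=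
  invariant_set_only_trivial_solution_general L ϑ Lp1 Lp2 hL hϑ hp1 hp12 hlen ω γ hω hγ a b hl2 hsum
end
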